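/- Let u : ℝ^d → ℝ^d be differentiable and x_i ∈ ℝ^d. Define the line-integral radial function ũ(x) = ∫₀¹ ⟪u(x_i + 2t(x - x_i)), 2(x - x_i)⟫ dt. Then ũ agrees with the pointwise radial component u_{i→}(x) = 2⟪u(x), x - x_i⟫ up to second order at x_i: ũ(x) - u_{i→}(x) = o(‖x - x_i‖²) as x → x_i. -/

import Mathlib

/-!
Write `u y = u xi + A (y - xi) + r y` with `A = Du(xi)` and `r y = o(‖y - xi‖)`. On the affine
part the two sides agree exactly: the segment from `xi` to `xi + 2 (x - xi)` has midpoint `x`,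
i.e. `∫₀¹ 2t dt = 1`. The remainder contributes `o(‖x - xi‖²)` to both sides, since `r` is only
evaluated within distance `2‖x - xi‖` of `xi` and paired with a vector of norm `2‖x - xi‖`.
-/

open Asymptotics Filter Topology
open scoped RealInnerProductSpace

section

variable {E : Type*} [NormedAddCommGroup E] [InnerProductSpace ℝ E]

theorem integral_inner_add_two_mul_smul (a b c : E) :
    ∫ t in (0:ℝ)..1, ⟪a + (2 * t) • b, c⟫ = ⟪a + b, c⟫ := by
  simp only [inner_add_left, real_inner_smul_left]
  rw [intervalIntegral.integral_add intervalIntegrable_const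
      (Continuous.intervalIntegrable (by fun_prop) _ _),
    intervalIntegral.integral_mul_const, intervalIntegral.integral_const_mul, integral_id]
  norm_num

theorem integral_inner_comp_segment_sub_affine {u : E → E} (hu : Continuous u)
    (A : E →L[ℝ] E) (x₀ x c : E) :
    ∫ t in (0:ℝ)..1, ⟪u (x₀ + (2 * t) • (x - x₀)) - (u x₀ + A (x₀ + (2 * t) • (x - x₀) - x₀)), c⟫
      = (∫ t in (0:ℝ)..1, ⟪u (x₀ + (2 * t) • (x - x₀)), c⟫) - ⟪u x₀ + A (x - x₀), c⟫ := by
  simp only [inner_sub_left, add_sub_cancel_left, map_smul]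
  rw [intervalIntegral.integral_sub (Continuous.intervalIntegrable (by fun_prop) _ _)
      (Continuous.intervalIntegrable (by fun_prop) _ _),
    integral_inner_add_two_mul_smul]

theorem isLittleO_intervalIntegral_inner_comp_segment {r : E → E} {x₀ : E}
    (hr : r =o[𝓝 x₀] fun y => y - x₀) :
    (fun x => ∫ t in (0:ℝ)..1, ⟪r (x₀ + (2 * t) • (x - x₀)), (2:ℝ) • (x - x₀)⟫)
      =o[𝓝 x₀] fun x => ‖x - x₀‖ ^ 2 := by
  rw [isLittleO_iff] at hr ⊢
  intro c hc
  obtain ⟨ε, hε, hball⟩ := Metric.eventually_nhds_iff.mp (hr (by positivity : 0 < c / 4))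
  filter_upwards [Metric.ball_mem_nhds x₀ (half_pos hε)] with x hx
  rw [Metric.mem_ball, dist_eq_norm] at hx
  have hbound : ∀ t ∈ Set.uIoc (0:ℝ) 1,
      ‖⟪r (x₀ + (2 * t) • (x - x₀)), (2:ℝ) • (x - x₀)⟫‖ ≤ c * ‖x - x₀‖ ^ 2 := by
    intro t ht
    rw [Set.uIoc_of_le zero_le_one] at ht
    have hseg : ‖x₀ + (2 * t) • (x - x₀) - x₀‖ ≤ 2 * ‖x - x₀‖ := by
      rw [add_sub_cancel_left, norm_smul, Real.norm_of_nonneg (by linarith [ht.1])]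
      nlinarith [ht.2, norm_nonneg (x - x₀)]
    have hr' := hball (show dist _ x₀ < ε by rw [dist_eq_norm]; linarith)
    calc ‖⟪r (x₀ + (2 * t) • (x - x₀)), (2:ℝ) • (x - x₀)⟫‖
        ≤ ‖r (x₀ + (2 * t) • (x - x₀))‖ * ‖(2:ℝ) • (x - x₀)‖ := norm_inner_le_norm _ _
      _ ≤ c / 4 * (2 * ‖x - x₀‖) * (2 * ‖x - x₀‖) := by
        rw [norm_smul, Real.norm_two]
        gcongr
        exact hr'.trans (by gcongr)
      _ = c * ‖x - x₀‖ ^ 2 := by ring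
  calc _ ≤ c * ‖x - x₀‖ ^ 2 * |1 - 0| := intervalIntegral.norm_integral_le_of_norm_le_const hbound
    _ = c * ‖‖x - x₀‖ ^ 2‖ := by simp

theorem isLittleO_inner_sub_sq {r : E → E} {x₀ : E} (hr : r =o[𝓝 x₀] fun y => y - x₀) :
    (fun x => ⟪r x, x - x₀⟫) =o[𝓝 x₀] fun x => ‖x - x₀‖ ^ 2 := by
  have hprod : (fun x => ‖r x‖ * ‖x - x₀‖) =o[𝓝 x₀] fun x => ‖x - x₀‖ * ‖x - x₀‖ :=
    hr.norm_norm.mul_isBigO (isBigO_refl _ _)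
  refine (IsBigO.of_bound 1 (Eventually.of_forall fun x => ?_)).trans_isLittleO
    (hprod.congr_right fun x => (sq _).symm)
  simpa [abs_mul] using norm_inner_le_norm (𝕜 := ℝ) (r x) (x - x₀)

end

/-- the line-integral radial function
`ũ x = ∫₀¹ ⟪u(xi + 2t(x - xi)), 2(x - xi)⟫ dt` agrees with the pointwise radial
component `2⟪u x, x - xi⟫` up to second order at `xi`. -/
theorem stmt6 (d : ℕ) (u : EuclideanSpace ℝ (Fin d) → EuclideanSpace ℝ (Fin d))
    (hu : ContDiff ℝ 1 u) (xi : EuclideanSpace ℝ (Fin d)) :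
    (fun x =>
        (∫ t in (0:ℝ)..1,
          (inner ℝ (u (xi + (2 * t) • (x - xi))) ((2 : ℝ) • (x - xi)) : ℝ)) -
        (2 : ℝ) * inner ℝ (u x) (x - xi))
      =o[nhds xi] fun x => ‖x - xi‖ ^ 2 := by
  set A := fderiv ℝ u xi
  set r := fun y => u y - (u xi + A (y - xi))
  have hr : r =o[𝓝 xi] fun y => y - xi :=
    (hu.differentiable one_ne_zero xi).hasFDerivAt.isLittleO.congr_left fun y => by
      simp only [r]; abel
  have hsplit : ∀ x, (∫ t in (0:ℝ)..1, ⟪r (xi + (2 * t) • (x - xi)), (2:ℝ) • (x - xi)⟫)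
      - 2 * ⟪r x, x - xi⟫
      = (∫ t in (0:ℝ)..1, ⟪u (xi + (2 * t) • (x - xi)), (2:ℝ) • (x - xi)⟫)
        - 2 * ⟪u x, x - xi⟫ := by
    intro x
    rw [integral_inner_comp_segment_sub_affine hu.continuous]
    simp only [r, inner_sub_left, inner_add_left, real_inner_smul_right]
    ring
  exact ((isLittleO_intervalIntegral_inner_comp_segment hr).sub
    ((isLittleO_inner_sub_sq hr).const_mul_left 2)).congr_left hsplit
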